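/- arXiv:0810.4968 — 3 statements merged into one kernel-verified Lean document; each statement's English description precedes it below -/
import Mathlib

section
/- Let n ≥ 1 be an integer, β > 0, B the ball of radius β centered at the origin in ℝⁿ, and f = 1_B/√vol(B) its normalized indicator function. Then for every z > 0, the power of the Fourier transform of f at frequencies of magnitude at most z satisfies ∫_{|k| ≤ z} |f̂(k)|² dk < (1/(πn)) · (2πβez/n)^n. In particular, taking z = n/(2πβe), at most a 1/(πn) fraction of the total power lies at frequencies of magnitude below n/(2πβe). -/
open MeasureTheory Real Set

noncomputable section
open scoped Classical

/-- Euclidean space `ℝⁿ`. -/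
abbrev En (n : ℕ) := EuclideanSpace ℝ (Fin n)

/-- The Fourier transform `f̂(k) = ∫ f(x) e^{-2πi k·x} dx`. -/
def fourierT {n : ℕ} (f : En n → ℂ) (k : En n) : ℂ :=
  ∫ x : En n, Complex.exp (-2 * Real.pi * Complex.I * ((inner ℝ k x : ℝ) : ℂ)) * f x

/-- The normalized indicator function `f = 1_B / √vol(B)` of the ball of radius `β`
centered at the origin. -/
def ballIndicator (n : ℕ) (β : ℝ) : En n → ℂ := fun x =>
  if x ∈ Metric.closedBall (0 : En n) β then
    ((Real.sqrt ((volume (Metric.closedBall (0 : En n) β)).toReal))⁻¹ : ℝ)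
  else 0

/-
Since `|f̂(k)| ≤ ‖f‖₁ = √vol(B_β)`, the power at frequencies `|k| ≤ z` is at most
`vol(B_z) vol(B_β) = (βz)ⁿ πⁿ / Γ(n/2 + 1)²`, so everything reduces to Stirling's lower
bound `Γ(x + 1)² > 2πx (x/e)^{2x}` at the half-integer `x = n/2`. For even `n` this is the
strict Stirling bound for `(n/2)!`. For odd `n = 2m + 1` we write
`Γ(m + 3/2) = √π (2m+1)! / (2^{2m+1} m!)`, bound `(2m+1)!` below by Stirling and `m!` above
by Robbins' `√(2πm) (m/e)^m e^{1/(12m)}`; what is left is `e^{1 + 1/(6m)} < (1 + 1/(2m))^{2m+1}`.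
-/

namespace Stirling

open Nat Filter Topology

theorem stirlingSeq_succ_succ_lt (n : ℕ) : stirlingSeq (n + 2) < stirlingSeq (n + 1) := by
  have hsum := log_stirlingSeq_sdiff_hasSum n
  have hpos : 0 < log (stirlingSeq (n + 1)) - log (stirlingSeq (n + 2)) :=
    lt_of_lt_of_le (by positivity) (le_hasSum hsum 0 fun k _ => by positivity)
  exact (log_lt_log_iff (stirlingSeq'_pos _) (stirlingSeq'_pos n)).mp (sub_pos.mp hpos)

theorem sqrt_pi_lt_stirlingSeq {n : ℕ} (hn : n ≠ 0) : √π < stirlingSeq n := by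
  obtain ⟨m, rfl⟩ := exists_eq_add_one_of_ne_zero hn
  exact (sqrt_pi_le_stirlingSeq (succ_ne_zero _)).trans_lt (stirlingSeq_succ_succ_lt m)

theorem stirling_eq_sqrt_pi_mul (n : ℕ) :
    √(2 * π * n) * (n / exp 1) ^ n = √π * (√(2 * n) * (n / exp 1) ^ n) := by
  simp [sqrt_mul']; ring

theorem lt_factorial_stirling {n : ℕ} (hn : n ≠ 0) :
    √(2 * π * n) * (n / exp 1) ^ n < n ! := by
  rw [stirling_eq_sqrt_pi_mul, ← lt_div_iff₀ (by positivity)]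
  exact sqrt_pi_lt_stirlingSeq hn

/-- Robbins' bound `log s(n) - log s(n+1) ≤ 1/(12n) - 1/(12(n+1))` makes
`log s(n) - 1/(12n)` increase to its limit `log √π`. -/
theorem log_stirlingSeq_le {n : ℕ} (hn : n ≠ 0) :
    log (stirlingSeq n) ≤ log √π + 1 / (12 * n) := by
  let g : ℕ → ℝ := fun k => log (stirlingSeq (k + 1)) - 1 / (12 * (k + 1))
  have hmono : Monotone g := by
    refine monotone_nat_of_le_succ fun k => ?_
    have hk := log_stirlingSeq_sdiff_le (k + 1)
    have hsplit : (1 : ℝ) / (12 * ↑(k + 1) * (↑(k + 1) + 1)) =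
        1 / (12 * ((k : ℝ) + 1)) - 1 / (12 * (((k + 1 : ℕ) : ℝ) + 1)) := by
      push_cast; field_simp; ring
    simp only [g]
    linarith
  have hlim : Tendsto g atTop (𝓝 (log √π)) := by
    have hs : Tendsto (fun k : ℕ => stirlingSeq (k + 1)) atTop (𝓝 √π) :=
      tendsto_stirlingSeq_sqrt_pi.comp (tendsto_add_atTop_nat 1)
    have hinv : Tendsto (fun k : ℕ => 1 / (12 * ((k : ℝ) + 1))) atTop (𝓝 0) :=
      tendsto_const_nhds.div_atTop <|
        (tendsto_natCast_atTop_atTop.atTop_add tendsto_const_nhds).const_mul_atTop (by norm_num)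
    simpa [g] using ((continuousAt_log (by positivity)).tendsto.comp hs).sub hinv
  obtain ⟨m, rfl⟩ := exists_eq_add_one_of_ne_zero hn
  have := hmono.ge_of_tendsto hlim m
  push_cast
  simp only [g] at this
  linarith

theorem factorial_le_stirling_mul_exp {n : ℕ} (hn : n ≠ 0) :
    (n ! : ℝ) ≤ √(2 * π * n) * (n / exp 1) ^ n * exp (1 / (12 * n)) := by
  have hs : stirlingSeq n ≤ √π * exp (1 / (12 * n)) := by
    have := exp_le_exp.mpr (log_stirlingSeq_le hn)
    obtain ⟨m, rfl⟩ := exists_eq_add_one_of_ne_zero hn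
    rwa [exp_log (stirlingSeq'_pos m), exp_add, exp_log (by positivity)] at this
  rw [stirlingSeq, div_le_iff₀ (by positivity)] at hs
  rw [stirling_eq_sqrt_pi_mul]
  linarith

end Stirling

namespace Real

open Nat Stirling

theorem one_add_one_div_six_mul_lt_mul_log {x : ℝ} (hx : 1 / 2 < x) :
    1 + 1 / (6 * x) < (2 * x + 1) * log (1 + 1 / (2 * x)) := by
  have hlog := le_log_one_add_of_nonneg (x := 1 / (2 * x)) (by positivity)
  have hfrac : 2 * (1 / (2 * x)) / (1 / (2 * x) + 2) = 2 / (4 * x + 1) := by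
    field_simp; ring
  rw [hfrac] at hlog
  calc 1 + 1 / (6 * x) < (2 * x + 1) * (2 / (4 * x + 1)) := by
        rw [show (2 * x + 1) * (2 / (4 * x + 1)) = 1 + 1 / (4 * x + 1) by field_simp; ring]
        gcongr
        linarith
    _ ≤ _ := by gcongr

theorem exp_mul_two_mul_pow_lt {m : ℕ} (hm : m ≠ 0) :
    exp (1 + 1 / (6 * m)) * (2 * m) ^ (2 * m + 1) < (2 * m + 1 : ℝ) ^ (2 * m + 1) := by
  have hm' : (1 / 2 : ℝ) < m := by
    have : (1 : ℝ) ≤ m := by exact_mod_cast one_le_iff_ne_zero.mpr hm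
    linarith
  calc exp (1 + 1 / (6 * m)) * (2 * m) ^ (2 * m + 1)
      < exp ((2 * m + 1 : ℕ) * log (1 + 1 / (2 * m))) * (2 * m) ^ (2 * m + 1) := by
        gcongr
        push_cast
        exact one_add_one_div_six_mul_lt_mul_log hm'
    _ = (2 * m + 1 : ℝ) ^ (2 * m + 1) := by
        rw [exp_nat_mul, exp_log (by positivity), ← mul_pow]
        congr 1
        field_simp

theorem Gamma_nat_add_one_add_half_mul (m : ℕ) :
    Gamma (m + 1 + 1 / 2) * (2 ^ (2 * m + 1) * m !) = √π * (2 * m + 1)! := by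
  have hfac : ((2 * m + 1)! : ℝ) = (2 * m + 1)‼ * (2 ^ m * m !) := by
    exact_mod_cast (factorial_eq_mul_doubleFactorial (2 * m)).trans
      (by rw [doubleFactorial_two_mul])
  rw [Gamma_nat_add_one_add_half, hfac]
  field_simp
  ring

theorem lt_Gamma_nat_add_one_add_half_sq_stirling {m : ℕ} (hm : m ≠ 0) :
    π * (2 * m + 1) * ((2 * m + 1) / (2 * exp 1)) ^ (2 * m + 1) < Gamma (m + 1 + 1 / 2) ^ 2 := by
  have hup := pow_le_pow_left₀ (by positivity) (factorial_le_stirling_mul_exp hm) 2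
  have hlow := pow_le_pow_left₀ (by positivity) (le_factorial_stirling (2 * m + 1)) 2
  have hkey := exp_mul_two_mul_pow_lt hm
  have hΓ := congrArg (· ^ 2) (Gamma_nat_add_one_add_half_mul m)
  push_cast at hup hlow hΓ
  simp only [mul_pow] at hup hlow hΓ
  rw [sq_sqrt (by positivity)] at hup hlow hΓ
  have hexp : exp (1 + 1 / (6 * m)) = exp 1 * exp (1 / (12 * m)) ^ 2 := by
    rw [sq, ← exp_add, ← exp_add]; ring_nf
  rw [hexp] at hkey
  have hD : (0 : ℝ) < (2 ^ (2 * m + 1)) ^ 2 * (m ! : ℝ) ^ 2 := by positivity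
  rw [← mul_lt_mul_iff_of_pos_right hD, hΓ]
  calc π * (2 * m + 1) * ((2 * m + 1) / (2 * exp 1)) ^ (2 * m + 1) *
        ((2 ^ (2 * m + 1)) ^ 2 * (m ! : ℝ) ^ 2)
      ≤ π * (2 * m + 1) * ((2 * m + 1) / (2 * exp 1)) ^ (2 * m + 1) * ((2 ^ (2 * m + 1)) ^ 2 *
          (2 * π * m * ((m / exp 1) ^ m) ^ 2 * exp (1 / (12 * m)) ^ 2)) := by gcongr
    _ = 2 * π ^ 2 * (2 * m + 1) * (2 * m + 1) ^ (2 * m + 1) / exp 1 ^ (2 * (2 * m + 1)) *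
          (exp 1 * exp (1 / (12 * m)) ^ 2 * (2 * m) ^ (2 * m + 1)) := by
        simp only [div_pow, mul_pow, ← pow_mul]
        field_simp
        ring
    _ < 2 * π ^ 2 * (2 * m + 1) * (2 * m + 1) ^ (2 * m + 1) / exp 1 ^ (2 * (2 * m + 1)) *
          (2 * m + 1) ^ (2 * m + 1) := by gcongr
    _ = π * (2 * π * (2 * m + 1) * (((2 * m + 1) / exp 1) ^ (2 * m + 1)) ^ 2) := by
        simp only [div_pow, ← pow_mul]
        field_simp
        ring
    _ ≤ π * ((2 * m + 1)! : ℝ) ^ 2 := by gcongr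

theorem lt_Gamma_div_two_add_one_sq_stirling {n : ℕ} (hn : n ≠ 0) :
    π * n * (n / (2 * exp 1)) ^ n < Gamma (n / 2 + 1) ^ 2 := by
  obtain ⟨m, rfl | rfl⟩ := even_or_odd' n
  · have hm : m ≠ 0 := by omega
    have h := pow_lt_pow_left₀ (lt_factorial_stirling hm) (by positivity) two_ne_zero
    rw [show ((2 * m : ℕ) : ℝ) / 2 + 1 = m + 1 by push_cast; ring, Gamma_nat_eq_factorial]
    refine (le_of_eq ?_).trans_lt h
    rw [mul_pow, sq_sqrt (by positivity)]
    push_cast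
    rw [mul_div_mul_left _ _ two_ne_zero, pow_mul']
    ring
  rcases eq_or_ne m 0 with rfl | hm
  · have he : 2 < exp 1 := by linarith [exp_one_gt_d9]
    rw [show ((2 * 0 + 1 : ℕ) : ℝ) / 2 + 1 = 1 / 2 + 1 by norm_num, Gamma_add_one (by norm_num),
      Gamma_one_half_eq]
    norm_num [mul_pow, sq_sqrt pi_pos.le]
    rw [mul_comm _ π]
    gcongr
    rw [inv_mul_lt_iff₀ (exp_pos 1)]
    linarith
  · rw [show ((2 * m + 1 : ℕ) : ℝ) / 2 + 1 = m + 1 + 1 / 2 by push_cast; ring]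
    exact_mod_cast lt_Gamma_nat_add_one_add_half_sq_stirling hm

end Real

theorem norm_fourierT_le_integral_norm {n : ℕ} (f : En n → ℂ) (k : En n) :
    ‖fourierT f k‖ ≤ ∫ x, ‖f x‖ := by
  refine (norm_integral_le_integral_norm _).trans_eq (integral_congr_ae (ae_of_all _ fun x => ?_))
  simp [Complex.norm_exp]

theorem setIntegral_norm_fourierT_sq_le {n : ℕ} (f : En n → ℂ) {s : Set (En n)}
    (hs : volume s < ⊤) :
    ∫ k in s, ‖fourierT f k‖ ^ 2 ≤ (∫ x, ‖f x‖) ^ 2 * (volume s).toReal :=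
  (le_abs_self _).trans <|
    norm_setIntegral_le_of_norm_le_const (f := fun k => ‖fourierT f k‖ ^ 2) hs fun k _ => by
    rw [norm_pow, norm_norm]
    exact pow_le_pow_left₀ (norm_nonneg _) (norm_fourierT_le_integral_norm f k) 2

theorem integral_norm_ballIndicator (n : ℕ) (β : ℝ) :
    ∫ x, ‖ballIndicator n β x‖ = √(volume (Metric.closedBall (0 : En n) β)).toReal := by
  have hnorm : (fun x => ‖ballIndicator n β x‖) = (Metric.closedBall (0 : En n) β).indicator
      fun _ => (√(volume (Metric.closedBall (0 : En n) β)).toReal)⁻¹ := by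
    ext x
    by_cases hx : x ∈ Metric.closedBall (0 : En n) β <;> simp [ballIndicator, hx]
  rw [hnorm, integral_indicator_const _ measurableSet_closedBall, smul_eq_mul, ← div_eq_mul_inv,
    measureReal_def, div_sqrt]

theorem volume_closedBall_toReal {n : ℕ} (hn : n ≠ 0) {r : ℝ} (hr : 0 ≤ r) :
    (volume (Metric.closedBall (0 : En n) r)).toReal = r ^ n * (√π ^ n / Gamma (n / 2 + 1)) := by
  have : NeZero n := ⟨hn⟩
  rw [EuclideanSpace.volume_closedBall, Fintype.card_fin, ENNReal.toReal_mul, ENNReal.toReal_pow,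
    ENNReal.toReal_ofReal hr, ENNReal.toReal_ofReal (by positivity)]

theorem volume_closedBall_mul_volume_closedBall_lt {n : ℕ} (hn : n ≠ 0) {β z : ℝ}
    (hβ : 0 < β) (hz : 0 < z) :
    (volume (Metric.closedBall (0 : En n) β)).toReal *
      (volume (Metric.closedBall (0 : En n) z)).toReal <
      1 / (π * n) * (2 * π * β * exp 1 * z / n) ^ n := by
  have hπ : √π ^ n * √π ^ n = π ^ n := by rw [← mul_pow, mul_self_sqrt pi_pos.le]
  calc _ = (β * z) ^ n * π ^ n / Gamma (n / 2 + 1) ^ 2 := by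
        rw [volume_closedBall_toReal hn hβ.le, volume_closedBall_toReal hn hz.le, ← hπ]
        field_simp
        ring
    _ < (β * z) ^ n * π ^ n / (π * n * (n / (2 * exp 1)) ^ n) := by
        gcongr
        exact lt_Gamma_div_two_add_one_sq_stirling hn
    _ = _ := by
        simp only [div_pow, mul_pow]
        field_simp

/-- **Low-frequency power of the ball.**  For the normalized indicator `f` of the ball of
radius `β` in `ℝⁿ` and every `z > 0`,
`∫_{|k| ≤ z} |f̂(k)|² dk < (1/(πn)) (2πβez/n)ⁿ`. -/
theorem ball_low_frequency_power
    (n : ℕ) (hn : 1 ≤ n) (β : ℝ) (hβ : 0 < β) (z : ℝ) (hz : 0 < z) :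
    (∫ k in Metric.closedBall (0 : En n) z, ‖fourierT (ballIndicator n β) k‖ ^ 2 <
      (1 / (Real.pi * n)) * (2 * Real.pi * β * Real.exp 1 * z / n) ^ n) ∧
    (∫ k in Metric.closedBall (0 : En n) ((n : ℝ) / (2 * Real.pi * β * Real.exp 1)),
        ‖fourierT (ballIndicator n β) k‖ ^ 2 < 1 / (Real.pi * n)) := by
  have hn₀ : n ≠ 0 := by omega
  have low_power_lt (z : ℝ) (hz : 0 < z) :
      ∫ k in Metric.closedBall (0 : En n) z, ‖fourierT (ballIndicator n β) k‖ ^ 2 <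
        1 / (π * n) * (2 * π * β * exp 1 * z / n) ^ n := by
    have h := setIntegral_norm_fourierT_sq_le (ballIndicator n β)
      (measure_closedBall_lt_top (x := (0 : En n)) (r := z))
    rw [integral_norm_ballIndicator, sq_sqrt ENNReal.toReal_nonneg] at h
    exact h.trans_lt (volume_closedBall_mul_volume_closedBall_lt hn₀ hβ hz)
  refine ⟨low_power_lt z hz, ?_⟩
  have h := low_power_lt (n / (2 * π * β * exp 1)) (by positivity)
  have hone : 2 * π * β * exp 1 * (n / (2 * π * β * exp 1)) / n = 1 := by field_simp
  rwa [hone, one_pow, mul_one] at h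

end
end

section
/- Let α ∈ ℝ and let f : [α, ∞) → ℝ be nonnegative, monotone nonincreasing, and integrable on [α, ∞). Then ∫_α^∞ f(x) cos²(x) dx ≥ (1/2) · ∫_{α+π}^∞ f(x) dx. -/
open Real MeasureTheory Set

/-!
Split `f = f cos² + f sin²` on `[α + π, ∞)`. The `cos²` part is at most `∫_α^∞ f cos²` because
the integrand is nonnegative. The `sin²` part becomes `∫_{α+π/2}^∞ f(y + π/2) cos² y` after the
shift `x = y + π/2`, and since `f` is nonincreasing this is again at most `∫_α^∞ f cos²`.
-/

theorem setIntegral_Ici_comp_add_right {E : Type*} [NormedAddCommGroup E] [NormedSpace ℝ E]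
    (g : ℝ → E) (a c : ℝ) : ∫ x in Ici a, g (x + c) = ∫ x in Ici (a + c), g x := by
  rw [← image_add_const_Ici]
  exact ((measurePreserving_add_right volume c).setIntegral_image_emb
    (measurableEmbedding_addRight c) g (Ici a)).symm

theorem AntitoneOn.setIntegral_Ici_comp_add_mul_le {f w : ℝ → ℝ} {a c : ℝ}
    (hmono : AntitoneOn f (Ici a)) (hf0 : ∀ x ∈ Ici a, 0 ≤ f x) (hw : ∀ x, 0 ≤ w x)
    (hc : 0 ≤ c) (hint : IntegrableOn (fun x => f x * w x) (Ici a)) :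
    ∫ x in Ici a, f (x + c) * w x ≤ ∫ x in Ici a, f x * w x := by
  have hshift : ∀ x ∈ Ici a, x + c ∈ Ici a := fun x hx => le_add_of_le_of_nonneg hx hc
  refine integral_mono_of_nonneg ?_ hint ?_
  · exact ae_restrict_of_forall_mem measurableSet_Ici fun x hx =>
      mul_nonneg (hf0 _ (hshift x hx)) (hw x)
  · exact ae_restrict_of_forall_mem measurableSet_Ici fun x hx =>
      mul_le_mul_of_nonneg_right (hmono hx (hshift x hx) (le_add_of_nonneg_right hc)) (hw x)

theorem AntitoneOn.setIntegral_Ici_mul_sin_sq_le {f : ℝ → ℝ} {a : ℝ}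
    (hmono : AntitoneOn f (Ici a)) (hf0 : ∀ x ∈ Ici a, 0 ≤ f x)
    (hint : IntegrableOn (fun x => f x * cos x ^ 2) (Ici a)) :
    ∫ x in Ici (a + π / 2), f x * sin x ^ 2 ≤ ∫ x in Ici a, f x * cos x ^ 2 := by
  rw [← setIntegral_Ici_comp_add_right]
  simp only [sin_add_pi_div_two]
  exact hmono.setIntegral_Ici_comp_add_mul_le hf0 (fun x => sq_nonneg _)
    (by positivity) hint

theorem MeasureTheory.IntegrableOn.mul_sq_of_abs_le_one {f g : ℝ → ℝ} {s : Set ℝ} (hf : IntegrableOn f s)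
    (hg : Continuous g) (hg1 : ∀ x, |g x| ≤ 1) : IntegrableOn (fun x => f x * g x ^ 2) s :=
  hf.mul_bdd (c := 1) (hg.pow 2).aestronglyMeasurable <| ae_of_all _ fun x => by
    rw [norm_pow, norm_eq_abs]
    exact pow_le_one₀ (abs_nonneg _) (hg1 x)

/-- **Averaging against `cos²`:**  if `f : [α, ∞) → ℝ` is nonnegative, monotone
nonincreasing and integrable, then `∫_α^∞ f(x) cos²(x) dx ≥ (1/2) ∫_{α+π}^∞ f(x) dx`. -/
theorem integral_cos_sq_ge (α : ℝ) (f : ℝ → ℝ)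
    (hf0 : ∀ x ∈ Set.Ici α, 0 ≤ f x)
    (hmono : AntitoneOn f (Set.Ici α))
    (hint : IntegrableOn f (Set.Ici α)) :
    (1 / 2) * ∫ x in Set.Ici (α + Real.pi), f x ≤
      ∫ x in Set.Ici α, f x * (Real.cos x) ^ 2 := by
  have hcos := hint.mul_sq_of_abs_le_one continuous_cos abs_cos_le_one
  have hsin := hint.mul_sq_of_abs_le_one continuous_sin abs_sin_le_one
  have hcos_nonneg : 0 ≤ᵐ[volume.restrict (Ici α)] fun x => f x * cos x ^ 2 :=
    ae_restrict_of_forall_mem measurableSet_Ici fun x hx => mul_nonneg (hf0 x hx) (sq_nonneg _)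
  have hcos_le {b : ℝ} (hb : α ≤ b) :
      ∫ x in Ici b, f x * cos x ^ 2 ≤ ∫ x in Ici α, f x * cos x ^ 2 :=
    setIntegral_mono_set hcos hcos_nonneg (Ici_subset_Ici.2 hb).eventuallyLE
  have hα : α ≤ α + π / 2 := by linarith [pi_pos]
  have hsub : Ici (α + π / 2) ⊆ Ici α := Ici_subset_Ici.2 hα
  have hsin_le : ∫ x in Ici (α + π), f x * sin x ^ 2 ≤ ∫ x in Ici α, f x * cos x ^ 2 := by
    rw [show α + π = α + π / 2 + π / 2 by ring]
    exact ((hmono.mono hsub).setIntegral_Ici_mul_sin_sq_le (fun x hx => hf0 x (hsub hx))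
      (hcos.mono_set hsub)).trans (hcos_le hα)
  have hsplit : ∫ x in Ici (α + π), f x =
      (∫ x in Ici (α + π), f x * cos x ^ 2) + ∫ x in Ici (α + π), f x * sin x ^ 2 := by
    have hsub' : Ici (α + π) ⊆ Ici α := Ici_subset_Ici.2 (by linarith [pi_pos])
    rw [← integral_add (hcos.mono_set hsub') (hsin.mono_set hsub')]
    simp only [← mul_add, cos_sq_add_sin_sq, mul_one]
  rw [hsplit]
  linarith [hcos_le (b := α + π) (by linarith [pi_pos])]
end

section
/- Let W(r) = √(8/3)·sin²(π log r) for 1/e ≤ r ≤ 1 and W(r) = 0 otherwise. Let h : (0,∞) → [0,∞] be measurable, let λ > 0, let 0 < η ≤ 1, and let n ≥ 2 be a real number. Then ∫₀^η ( ∫₀^∞ h(r) · W(λ·a·r)² · r^{n−1} dr ) da ≤ (1/λ) · ∫_{1/(λ η e)}^∞ h(r) · r^{n−2} dr. -/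
/-!
Integrate in `a` first (Tonelli). For fixed `r > 0` the substitution `t = L r a` bounds the
`a`-integral of `W(L a r)²` by `(L r)⁻¹ ∫ W²`, and `∫ W² ≤ 1`: with `t = eᵘ`,
`∫_{1/e}^1 sin⁴(π log t) dt = ∫_{-1}^0 sin⁴(π u) eᵘ du ≤ ∫_{-1}^0 sin⁴(π u) du = 3/8`,
which is what the constant `√(8/3)` is normalised against. Since `W` vanishes below `1/e`, the
`a`-integral over `(0, η]` is zero unless `L η r ≥ 1/e`, i.e. `r ≥ 1/(L η e)`, and
`r^{n-1} / (L r) = r^{n-2} / L` on the remaining range.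
-/

open Real MeasureTheory Set
open scoped ENNReal Classical

noncomputable section

/-- The radial window `W(r) = √(8/3) sin²(π log r)` on `[1/e, 1]`, `0` elsewhere. -/
def W0 : ℝ → ℝ := fun r =>
  if (Real.exp 1)⁻¹ ≤ r ∧ r ≤ 1 then Real.sqrt (8 / 3) * (Real.sin (Real.pi * Real.log r)) ^ 2
  else 0

@[fun_prop]
lemma measurable_W0 : Measurable W0 :=
  Measurable.ite (measurableSet_Icc (a := (exp 1)⁻¹) (b := 1)) (by fun_prop) measurable_const

lemma W0_eq_zero_of_lt {t : ℝ} (ht : t < (exp 1)⁻¹) : W0 t = 0 :=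
  if_neg fun h => ht.not_ge h.1

lemma W0_sq_eq_indicator :
    (fun t => W0 t ^ 2) = (Icc (exp 1)⁻¹ 1).indicator fun t => 8 / 3 * sin (π * log t) ^ 4 := by
  funext t
  by_cases ht : (exp 1)⁻¹ ≤ t ∧ t ≤ 1
  · rw [W0, if_pos ht, indicator_of_mem (mem_Icc.2 ht), mul_pow, sq_sqrt (by norm_num)]
    ring
  · rw [W0, if_neg ht, indicator_of_notMem (mt mem_Icc.1 ht)]
    norm_num

lemma integral_sin_pi_mul_pow_four : ∫ u in (-1 : ℝ)..0, sin (π * u) ^ 4 = 3 / 8 := by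
  rw [intervalIntegral.integral_comp_mul_left (fun x => sin x ^ 4) pi_ne_zero,
    integral_sin_pow, integral_sin_sq]
  simp [field]
  ring

lemma continuousOn_sin_pi_mul_log_pow (m : ℕ) :
    ContinuousOn (fun t => sin (π * log t) ^ m) (Ioi 0) :=
  (continuous_sin.comp_continuousOn
    ((continuousOn_log.mono fun _ ht => ne_of_gt ht).const_smul π)).pow m

lemma integral_sin_pi_mul_log_pow_four_le :
    ∫ t in (exp 1)⁻¹..1, sin (π * log t) ^ 4 ≤ 3 / 8 := by
  have hsubst : ∫ u in (-1 : ℝ)..0, (fun t => sin (π * log t) ^ 4) (exp u) * exp u =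
      ∫ t in exp (-1)..exp 0, sin (π * log t) ^ 4 :=
    intervalIntegral.integral_comp_mul_deriv' (fun u _ => hasDerivAt_exp u)
      continuous_exp.continuousOn
      ((continuousOn_sin_pi_mul_log_pow 4).mono (image_subset_iff.2 fun u _ => exp_pos u))
  rw [exp_neg, exp_zero] at hsubst
  rw [← hsubst, ← integral_sin_pi_mul_pow_four]
  simp only [log_exp]
  exact intervalIntegral.integral_mono_on (by norm_num)
    (Continuous.intervalIntegrable (by fun_prop) _ _)
    (Continuous.intervalIntegrable (by fun_prop) _ _)
    fun u hu => mul_le_of_le_one_right (by positivity) (exp_le_one_iff.2 hu.2)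

lemma integrable_W0_sq : Integrable fun t => W0 t ^ 2 := by
  rw [W0_sq_eq_indicator, integrable_indicator_iff measurableSet_Icc]
  exact ContinuousOn.integrableOn_compact isCompact_Icc
    (continuousOn_const.mul ((continuousOn_sin_pi_mul_log_pow 4).mono
      fun _ (ht : _ ∈ Icc _ _) => (inv_pos.2 (exp_pos 1)).trans_le ht.1))

lemma integral_W0_sq_le_one : ∫ t, W0 t ^ 2 ≤ 1 := by
  have hle : (exp 1)⁻¹ ≤ 1 := inv_le_one_of_one_le₀ (one_le_exp zero_le_one)
  rw [W0_sq_eq_indicator, integral_indicator measurableSet_Icc, integral_Icc_eq_integral_Ioc,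
    ← intervalIntegral.integral_of_le hle, intervalIntegral.integral_const_mul]
  linarith [integral_sin_pi_mul_log_pow_four_le]

lemma lintegral_W0_sq_comp_mul_le {c : ℝ} (hc : 0 < c) :
    ∫⁻ a, ENNReal.ofReal (W0 (c * a) ^ 2) ≤ ENNReal.ofReal c⁻¹ := by
  rw [← ofReal_integral_eq_lintegral_ofReal (integrable_W0_sq.comp_mul_left' hc.ne')
    (ae_of_all _ fun _ => sq_nonneg _), Measure.integral_comp_mul_left (fun t => W0 t ^ 2) c,
    smul_eq_mul, abs_of_pos (inv_pos.2 hc)]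
  exact ENNReal.ofReal_le_ofReal
    (mul_le_of_le_one_right (inv_nonneg.2 hc.le) integral_W0_sq_le_one)

lemma setLIntegral_Ioc_W0_sq_comp_mul_eq_zero {c η : ℝ} (hc : 0 ≤ c) (hcη : c * η < (exp 1)⁻¹) :
    ∫⁻ a in Ioc 0 η, ENNReal.ofReal (W0 (c * a) ^ 2) = 0 := by
  refine setLIntegral_eq_zero measurableSet_Ioc fun a ha => ?_
  have : c * a < (exp 1)⁻¹ := (mul_le_mul_of_nonneg_left ha.2 hc).trans_lt hcη
  simp [W0_eq_zero_of_lt this]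

lemma setLIntegral_Ioc_W0_sq_mul_rpow_le {L η r n : ℝ} (hL : 0 < L) (hη : 0 < η) (hr : 0 < r) :
    ∫⁻ a in Ioc 0 η, ENNReal.ofReal (W0 (L * a * r) ^ 2 * r ^ (n - 1)) ≤
      (Ici (1 / (L * η * exp 1))).indicator
        (fun r => ENNReal.ofReal (1 / L) * ENNReal.ofReal (r ^ (n - 2))) r := by
  have hfactor : ∀ a, ENNReal.ofReal (W0 (L * a * r) ^ 2 * r ^ (n - 1)) =
      ENNReal.ofReal (r ^ (n - 1)) * ENNReal.ofReal (W0 ((L * r) * a) ^ 2) := fun a => by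
    rw [mul_comm, ENNReal.ofReal_mul (by positivity), mul_right_comm L]
  rw [lintegral_congr hfactor, lintegral_const_mul _ (by fun_prop)]
  by_cases hthr : r ∈ Ici (1 / (L * η * exp 1))
  · rw [indicator_of_mem hthr, ← ENNReal.ofReal_mul (by positivity)]
    calc _ ≤ ENNReal.ofReal (r ^ (n - 1)) * ENNReal.ofReal (L * r)⁻¹ :=
          mul_le_mul_right ((setLIntegral_le_lintegral _ _).trans
            (lintegral_W0_sq_comp_mul_le (by positivity))) _
      _ = ENNReal.ofReal (1 / L * r ^ (n - 2)) := by
          rw [← ENNReal.ofReal_mul (by positivity), show n - 1 = n - 2 + 1 by ring,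
            rpow_add_one hr.ne']
          field_simp
  · rw [indicator_of_notMem hthr, setLIntegral_Ioc_W0_sq_comp_mul_eq_zero (by positivity),
      mul_zero]
    have := (lt_div_iff₀ (by positivity)).1 (notMem_Ici.1 hthr)
    rw [← one_div, lt_div_iff₀ (exp_pos 1)]
    linarith

theorem radial_window_integral_le_general (h : ℝ → ℝ≥0∞) (hmeas : Measurable h)
    (L : ℝ) (hL : 0 < L) (η : ℝ) (hη0 : 0 < η)
    (n : ℝ) :
    (∫⁻ a in Set.Ioc (0 : ℝ) η,
        ∫⁻ r in Set.Ioi (0 : ℝ), h r * ENNReal.ofReal ((W0 (L * a * r)) ^ 2 * r ^ (n - 1))) ≤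
      ENNReal.ofReal (1 / L) *
        ∫⁻ r in Set.Ici (1 / (L * η * Real.exp 1)), h r * ENNReal.ofReal (r ^ (n - 2)) := by
  set g : ℝ → ℝ≥0∞ := fun r => ENNReal.ofReal (1 / L) * ENNReal.ofReal (r ^ (n - 2))
  rw [lintegral_lintegral_swap (by fun_prop)]
  calc _ = ∫⁻ r in Ioi 0, h r *
        ∫⁻ a in Ioc 0 η, ENNReal.ofReal (W0 (L * a * r) ^ 2 * r ^ (n - 1)) :=
        lintegral_congr fun r => lintegral_const_mul _ (by fun_prop)
    _ ≤ ∫⁻ r in Ioi 0, (Ici (1 / (L * η * exp 1))).indicator (fun r => h r * g r) r :=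
        setLIntegral_mono ((by fun_prop : Measurable _).indicator measurableSet_Ici) fun r hr => by
          rw [indicator_mul_right]
          exact mul_le_mul_right (setLIntegral_Ioc_W0_sq_mul_rpow_le hL hη0 hr) _
    _ ≤ ∫⁻ r in Ici (1 / (L * η * exp 1)), h r * g r := by
        rw [lintegral_indicator measurableSet_Ici, Measure.restrict_restrict measurableSet_Ici]
        exact lintegral_mono_set inter_subset_left
    _ = _ := by
        simp only [g, mul_left_comm (h _)]
        exact lintegral_const_mul _ (by fun_prop)

/-- **Radial window integral bound:**  for measurable `h : (0,∞) → [0,∞]`, `λ > 0`,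
`0 < η ≤ 1` and real `n ≥ 2`,
`∫₀^η ∫₀^∞ h(r) W(λ a r)² r^{n−1} dr da ≤ (1/λ) ∫_{1/(ληe)}^∞ h(r) r^{n−2} dr`. -/
theorem radial_window_integral_le (h : ℝ → ℝ≥0∞) (hmeas : Measurable h)
    (L : ℝ) (hL : 0 < L) (η : ℝ) (hη0 : 0 < η) (hη1 : η ≤ 1)
    (n : ℝ) (hn : 2 ≤ n) :
    (∫⁻ a in Set.Ioc (0 : ℝ) η,
        ∫⁻ r in Set.Ioi (0 : ℝ), h r * ENNReal.ofReal ((W0 (L * a * r)) ^ 2 * r ^ (n - 1))) ≤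
      ENNReal.ofReal (1 / L) *
        ∫⁻ r in Set.Ici (1 / (L * η * Real.exp 1)), h r * ENNReal.ofReal (r ^ (n - 2)) :=
  radial_window_integral_le_general h hmeas L hL η hη0 n

end
end
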